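/- For two disjoint graphs G and H, the b-number of their disjoint union equals the product of their b-numbers: b(G ⊔ H) = b(G)·b(H). -/

import Mathlib

open scoped Classical

/-- A graph is *even* if every connected component has an even number of vertices. -/
def SimpleGraph.IsEvenGraph {V : Type*} (G : SimpleGraph V) : Prop :=
  ∀ c : G.ConnectedComponent, Even (Nat.card c.supp)

/-- A graph is *odd* if every connected component has an odd number of vertices. -/
def SimpleGraph.IsOddGraph {V : Type*} (G : SimpleGraph V) : Prop :=
  ∀ c : G.ConnectedComponent, Odd (Nat.card c.supp)

/-- The number of connected components of a graph. -/
noncomputable def SimpleGraph.kappa {V : Type*} (G : SimpleGraph V) : ℕ :=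
  Nat.card G.ConnectedComponent

/-- The `a`-number of the induced subgraph `G[s]`, defined recursively:
`1` for the null graph, `0` if `G[s]` is not even, and minus the sum of the
`a`-numbers of all proper induced subgraphs otherwise. -/
noncomputable def aNum {V : Type*} (G : SimpleGraph V) (s : Finset V) : ℤ :=
  if s = ∅ then 1
  else if (G.induce (s : Set V)).IsEvenGraph then
    - ∑ t ∈ (s.powerset.filter (· ≠ s)).attach, aNum G t.1
  else 0
termination_by s.card
decreasing_by
  have h := t.2
  simp only [Finset.mem_filter, Finset.mem_powerset] at h
  exact Finset.card_lt_card (lt_of_le_of_ne h.1 h.2)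

/-- The `b`-number of the induced subgraph `G[s]`, defined recursively:
`1` for the null graph, `0` if `G[s]` is not odd, and minus the sum of the
`b`-numbers of all proper induced subgraphs otherwise. -/
noncomputable def bNum {V : Type*} (G : SimpleGraph V) (s : Finset V) : ℤ :=
  if s = ∅ then 1
  else if (G.induce (s : Set V)).IsOddGraph then
    - ∑ t ∈ (s.powerset.filter (· ≠ s)).attach, bNum G t.1
  else 0
termination_by s.card
decreasing_by
  have h := t.2
  simp only [Finset.mem_filter, Finset.mem_powerset] at h
  exact Finset.card_lt_card (lt_of_le_of_ne h.1 h.2)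

/-- The `a`-number of a finite graph `G`. -/
noncomputable def aNumber {V : Type*} [Fintype V] (G : SimpleGraph V) : ℤ :=
  aNum G Finset.univ

/-- The `b`-number of a finite graph `G`. -/
noncomputable def bNumber {V : Type*} [Fintype V] (G : SimpleGraph V) : ℤ :=
  bNum G Finset.univ

section Aux

open SimpleGraph

variable {α β : Type*} {G : SimpleGraph α} {H : SimpleGraph β}

lemma isOddGraph_of_iso {V W : Type*} {A : SimpleGraph V} {B : SimpleGraph W}
    (e : A ≃g B) (h : A.IsOddGraph) : B.IsOddGraph := by
  intro c
  obtain ⟨c, rfl⟩ := e.connectedComponentEquiv.surjective c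
  rw [← Nat.card_congr (ConnectedComponent.isoEquivSupp e c)]
  exact h c

lemma isOddGraph_iff_iso {V W : Type*} {A : SimpleGraph V} {B : SimpleGraph W}
    (e : A ≃g B) : A.IsOddGraph ↔ B.IsOddGraph :=
  ⟨isOddGraph_of_iso e, isOddGraph_of_iso e.symm⟩

lemma sum_walk_inl {x y : α ⊕ β} (w : (G ⊕g H).Walk x y) :
    ∀ u, x = Sum.inl u → ∃ v, y = Sum.inl v ∧ G.Reachable u v := by
  induction w with
  | nil => exact fun u hu => ⟨u, hu, Reachable.refl u⟩
  | @cons a b c h p ih =>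
    rintro u rfl
    cases b with
    | inl b =>
      obtain ⟨v, rfl, hr⟩ := ih b rfl
      exact ⟨v, rfl, (Adj.reachable (by exact h)).trans hr⟩
    | inr b => exact absurd h (by simp [SimpleGraph.sum])

lemma sum_walk_inr {x y : α ⊕ β} (w : (G ⊕g H).Walk x y) :
    ∀ u, x = Sum.inr u → ∃ v, y = Sum.inr v ∧ H.Reachable u v := by
  induction w with
  | nil => exact fun u hu => ⟨u, hu, Reachable.refl u⟩
  | @cons a b c h p ih =>
    rintro u rfl
    cases b with
    | inr b =>
      obtain ⟨v, rfl, hr⟩ := ih b rfl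
      exact ⟨v, rfl, (Adj.reachable (by exact h)).trans hr⟩
    | inl b => exact absurd h (by simp [SimpleGraph.sum])

lemma reach_sum_inl {u v : α} :
    (G ⊕g H).Reachable (Sum.inl u) (Sum.inl v) ↔ G.Reachable u v := by
  constructor
  · rintro ⟨w⟩
    obtain ⟨v', hv, hr⟩ := sum_walk_inl w u rfl
    rw [Sum.inl.injEq] at hv
    exact hv ▸ hr
  · exact fun h => h.map Embedding.sumInl.toHom

lemma reach_sum_inr {u v : β} :
    (G ⊕g H).Reachable (Sum.inr u) (Sum.inr v) ↔ H.Reachable u v := by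
  constructor
  · rintro ⟨w⟩
    obtain ⟨v', hv, hr⟩ := sum_walk_inr w u rfl
    rw [Sum.inr.injEq] at hv
    exact hv ▸ hr
  · exact fun h => h.map Embedding.sumInr.toHom

lemma not_reach_sum {u : α} {v : β} : ¬ (G ⊕g H).Reachable (Sum.inl u) (Sum.inr v) := by
  rintro ⟨w⟩
  obtain ⟨v', hv, -⟩ := sum_walk_inl w u rfl
  exact Sum.inr_ne_inl hv

lemma supp_sum_inl (u : α) :
    ((G ⊕g H).connectedComponentMk (Sum.inl u)).supp
      = Sum.inl '' (G.connectedComponentMk u).supp := by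
  ext x
  cases x with
  | inl a =>
    simp only [ConnectedComponent.mem_supp_iff, ConnectedComponent.eq, Set.mem_image,
      Sum.inl.injEq, reach_sum_inl]
    exact ⟨fun h => ⟨a, h, rfl⟩, fun ⟨b, hb, hba⟩ => hba ▸ hb⟩
  | inr b =>
    simp only [ConnectedComponent.mem_supp_iff, ConnectedComponent.eq, Set.mem_image]
    constructor
    · intro h; exact absurd h.symm not_reach_sum
    · rintro ⟨b', -, h⟩; exact (Sum.inl_ne_inr h).elim

lemma supp_sum_inr (u : β) :
    ((G ⊕g H).connectedComponentMk (Sum.inr u)).supp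
      = Sum.inr '' (H.connectedComponentMk u).supp := by
  ext x
  cases x with
  | inr a =>
    simp only [ConnectedComponent.mem_supp_iff, ConnectedComponent.eq, Set.mem_image,
      Sum.inr.injEq, reach_sum_inr]
    exact ⟨fun h => ⟨a, h, rfl⟩, fun ⟨b, hb, hba⟩ => hba ▸ hb⟩
  | inl b =>
    simp only [ConnectedComponent.mem_supp_iff, ConnectedComponent.eq, Set.mem_image]
    constructor
    · intro h; exact absurd h not_reach_sum
    · rintro ⟨b', -, h⟩; exact (Sum.inr_ne_inl h).elim

lemma card_supp_sum_inl (u : α) :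
    Nat.card ((G ⊕g H).connectedComponentMk (Sum.inl u)).supp
      = Nat.card (G.connectedComponentMk u).supp := by
  rw [supp_sum_inl]
  exact Nat.card_congr (Equiv.Set.image _ _ Sum.inl_injective).symm

lemma card_supp_sum_inr (u : β) :
    Nat.card ((G ⊕g H).connectedComponentMk (Sum.inr u)).supp
      = Nat.card (H.connectedComponentMk u).supp := by
  rw [supp_sum_inr]
  exact Nat.card_congr (Equiv.Set.image _ _ Sum.inr_injective).symm

lemma isOddGraph_sum_iff :
    (G ⊕g H).IsOddGraph ↔ G.IsOddGraph ∧ H.IsOddGraph := by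
  constructor
  · intro h
    constructor
    · intro c
      refine c.ind (fun u => ?_)
      have := h ((G ⊕g H).connectedComponentMk (Sum.inl u))
      rwa [card_supp_sum_inl] at this
    · intro c
      refine c.ind (fun u => ?_)
      have := h ((G ⊕g H).connectedComponentMk (Sum.inr u))
      rwa [card_supp_sum_inr] at this
  · rintro ⟨h1, h2⟩ c
    refine c.ind (fun x => ?_)
    cases x with
    | inl u => rw [card_supp_sum_inl]; exact h1 _
    | inr u => rw [card_supp_sum_inr]; exact h2 _

/-- The iso between the induced subgraph of a disjoint sum and the disjoint sum of induced
subgraphs. -/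
noncomputable def induceSumIso (G : SimpleGraph α) (H : SimpleGraph β) (s : Finset (α ⊕ β)) :
    (G.induce (↑s.toLeft : Set α) ⊕g H.induce (↑s.toRight : Set β))
      ≃g (G ⊕g H).induce (↑s : Set (α ⊕ β)) where
  toFun := Sum.elim
    (fun a => ⟨Sum.inl a.1, Finset.mem_coe.mpr (Finset.mem_toLeft.mp (Finset.mem_coe.mp a.2))⟩)
    (fun b => ⟨Sum.inr b.1, Finset.mem_coe.mpr (Finset.mem_toRight.mp (Finset.mem_coe.mp b.2))⟩)
  invFun := fun x => match x with
    | ⟨Sum.inl a, h⟩ =>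
        Sum.inl ⟨a, Finset.mem_coe.mpr (Finset.mem_toLeft.mpr (Finset.mem_coe.mp h))⟩
    | ⟨Sum.inr b, h⟩ =>
        Sum.inr ⟨b, Finset.mem_coe.mpr (Finset.mem_toRight.mpr (Finset.mem_coe.mp h))⟩
  left_inv := by rintro (⟨a, ha⟩ | ⟨b, hb⟩) <;> rfl
  right_inv := by rintro ⟨(a | b), h⟩ <;> rfl
  map_rel_iff' := by
    rintro (⟨a, ha⟩ | ⟨b, hb⟩) (⟨a', ha'⟩ | ⟨b', hb'⟩) <;> exact Iff.rfl

lemma induce_sum_odd_iff (G : SimpleGraph α) (H : SimpleGraph β) (s : Finset (α ⊕ β)) :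
    ((G ⊕g H).induce (↑s : Set (α ⊕ β))).IsOddGraph
      ↔ (G.induce (↑s.toLeft : Set α)).IsOddGraph
        ∧ (H.induce (↑s.toRight : Set β)).IsOddGraph := by
  rw [← isOddGraph_iff_iso (induceSumIso G H s), isOddGraph_sum_iff]

lemma induce_empty_odd {V : Type*} (G : SimpleGraph V) :
    (G.induce (↑(∅ : Finset V) : Set V)).IsOddGraph := by
  intro c
  exact c.ind (fun v => absurd v.2 (by simp))

lemma bNum_empty {V : Type*} (G : SimpleGraph V) : bNum G ∅ = 1 := by
  rw [bNum]; simp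

lemma bNum_of_not_odd {V : Type*} {G : SimpleGraph V} {s : Finset V}
    (h : ¬ (G.induce (↑s : Set V)).IsOddGraph) : bNum G s = 0 := by
  have hne : s ≠ ∅ := by rintro rfl; exact h (induce_empty_odd G)
  rw [bNum, if_neg hne, if_neg h]

lemma bNum_eq_of_odd {V : Type*} (G : SimpleGraph V) {s : Finset V} (hs : s ≠ ∅)
    (h : (G.induce (↑s : Set V)).IsOddGraph) :
    bNum G s = - ∑ t ∈ s.powerset.erase s, bNum G t := by
  rw [bNum, if_neg hs, if_pos h, Finset.sum_attach]
  congr 1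
  refine Finset.sum_congr ?_ (fun _ _ => rfl)
  ext t
  simp only [Finset.mem_filter, Finset.mem_erase, Finset.mem_powerset]
  tauto

lemma sum_powerset_bNum {V : Type*} (G : SimpleGraph V) {s : Finset V} (hs : s ≠ ∅)
    (h : (G.induce (↑s : Set V)).IsOddGraph) : ∑ t ∈ s.powerset, bNum G t = 0 := by
  have hb := bNum_eq_of_odd G hs h
  rw [← Finset.sum_erase_add _ _ (Finset.mem_powerset_self s), hb]
  ring

lemma bNum_sum_eq (G : SimpleGraph α) (H : SimpleGraph β) (s : Finset (α ⊕ β)) :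
    bNum (G ⊕g H) s = bNum G s.toLeft * bNum H s.toRight := by
  induction s using Finset.strongInductionOn with
  | _ s ih =>
  rcases eq_or_ne s ∅ with rfl | hs
  · have h1 : (∅ : Finset (α ⊕ β)).toLeft = ∅ := rfl
    have h2 : (∅ : Finset (α ⊕ β)).toRight = ∅ := rfl
    rw [h1, h2, bNum_empty, bNum_empty, bNum_empty]; ring
  by_cases hodd : ((G ⊕g H).induce (↑s : Set (α ⊕ β))).IsOddGraph
  · obtain ⟨hV, hW⟩ := (induce_sum_odd_iff G H s).mp hodd
    have h1 := sum_powerset_bNum (G ⊕g H) hs hodd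
    have hsplit : ∑ t ∈ s.powerset, bNum G t.toLeft * bNum H t.toRight
        = (∑ u ∈ s.toLeft.powerset, bNum G u) * (∑ w ∈ s.toRight.powerset, bNum H w) := by
      rw [Finset.sum_mul_sum, ← Finset.sum_product']
      refine Finset.sum_nbij' (fun t => (t.toLeft, t.toRight)) (fun p => p.1.disjSum p.2)
        ?_ ?_ ?_ ?_ ?_
      · intro t ht
        simp only [Finset.mem_powerset] at ht
        simp only [Finset.mem_product, Finset.mem_powerset]
        exact ⟨Finset.toLeft_subset_toLeft ht, Finset.toRight_subset_toRight ht⟩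
      · intro p hp
        simp only [Finset.mem_product, Finset.mem_powerset] at hp
        simp only [Finset.mem_powerset]
        intro x hx
        rw [Finset.mem_disjSum] at hx
        rcases hx with ⟨a, ha, rfl⟩ | ⟨b, hb, rfl⟩
        · exact Finset.mem_toLeft.mp (hp.1 ha)
        · exact Finset.mem_toRight.mp (hp.2 hb)
      · intro t _; exact Finset.toLeft_disjSum_toRight
      · intro p _; simp
      · intro t _; rfl
    have h3 : ∑ t ∈ s.powerset, bNum G t.toLeft * bNum H t.toRight = 0 := by
      rw [hsplit]
      rcases eq_or_ne s.toLeft ∅ with hL | hL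
      · have hR : s.toRight ≠ ∅ := by
          intro hR
          exact hs (by rw [← Finset.toLeft_disjSum_toRight (u := s), hL, hR]; simp)
        rw [sum_powerset_bNum H hR hW]; ring
      · rw [sum_powerset_bNum G hL hV]; ring
    have h4 : ∑ t ∈ s.powerset, (bNum (G ⊕g H) t - bNum G t.toLeft * bNum H t.toRight)
        = bNum (G ⊕g H) s - bNum G s.toLeft * bNum H s.toRight := by
      apply Finset.sum_eq_single_of_mem s (Finset.mem_powerset_self s)
      intro t ht hne
      rw [ih t (lt_of_le_of_ne (Finset.mem_powerset.mp ht) hne)]; ring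
    rw [Finset.sum_sub_distrib, h1, h3] at h4
    linarith
  · rw [bNum, if_neg hs, if_neg hodd]
    rw [induce_sum_odd_iff] at hodd
    rcases not_and_or.mp hodd with h | h
    · rw [bNum_of_not_odd h]; ring
    · rw [bNum_of_not_odd h]; ring

end Aux

/-- For two disjoint graphs `G` and `H`, the `b`-number of their
disjoint union equals the product of their `b`-numbers. -/
theorem bNumber_sum {V W : Type*} [Fintype V] [Fintype W]
    (G : SimpleGraph V) (H : SimpleGraph W) :
    bNumber (G ⊕g H) = bNumber G * bNumber H := by
  have h := bNum_sum_eq G H Finset.univ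
  have hL : (Finset.univ : Finset (V ⊕ W)).toLeft = Finset.univ := by ext x; simp
  have hR : (Finset.univ : Finset (V ⊕ W)).toRight = Finset.univ := by ext x; simp
  rw [bNumber, bNumber, bNumber, h, hL, hR]
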